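/- arXiv:2312.14997 — 2 statements merged into one kernel-verified Lean document; each statement's English description precedes it below -/
import Mathlib

section
/- Let a > 0, let i ≥ 2 be an integer, and let h : ℝ → ℝ be continuous and bounded. Define F_j(t) = ∫_{τ ∈ (-∞, t]} h(τ) · g_a^j(t - τ) dτ for each integer j ≥ 1. Then for every t ∈ ℝ, F_i is differentiable at t with F_i'(t) = a·(F_{i-1}(t) - F_i(t)). -/
open Real MeasureTheory

/-- Erlang density with shape parameter `i` and rate parameter `a`. -/
noncomputable def erlang (a : ℝ) (i : ℕ) (t : ℝ) : ℝ :=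
  a ^ i * t ^ (i - 1) * Real.exp (-a * t) / (Nat.factorial (i - 1))

/-!
With `U_m(x) = ∫_{-∞}^x (x - τ)^m h(τ) e^{aτ} dτ` one has
`F_{m+1}(x) = a^{m+1}/m! · e^{-ax} U_m(x)`, so by the product rule everything reduces to
`U_{m+1}' = (m + 1) U_m`. Splitting `(x - τ)^{m+1} = x (x - τ)^m - τ (x - τ)^m` turns this into
an induction on `m` over all weights `f` in place of `h(τ) e^{aτ}` (the step passes from `f` to
`τ f`), starting from the fundamental theorem of calculus for `U_0`; boundedness of `h` and
`a > 0` make all these integrals converge.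
-/

open Set

theorem hasDerivAt_integral_Iic {E : Type*} [NormedAddCommGroup E] [NormedSpace ℝ E]
    [CompleteSpace E] {g : ℝ → E} (hg : Continuous g) (hint : ∀ x, IntegrableOn g (Iic x))
    (t : ℝ) : HasDerivAt (fun x => ∫ τ in Iic x, g τ) (g t) t := by
  have hsplit :
      (fun x => ∫ τ in Iic x, g τ) = fun x => (∫ τ in Iic 0, g τ) + ∫ τ in 0..x, g τ := by
    ext x
    rw [← intervalIntegral.integral_Iic_sub_Iic (hint 0) (hint x), add_sub_cancel]
  rw [hsplit]
  exact (intervalIntegral.integral_hasDerivAt_right (hg.intervalIntegrable 0 t)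
    (hg.stronglyMeasurableAtFilter _ _) hg.continuousAt).const_add _

/-- `m!` times the `(m + 1)`-fold iterated integral of `f` from `-∞`, by Cauchy's formula for
repeated integration. -/
noncomputable def powKernelIntegral (f : ℝ → ℝ) (m : ℕ) (x : ℝ) : ℝ :=
  ∫ τ in Iic x, (x - τ) ^ m * f τ

def IntegrableMomentsIic (f : ℝ → ℝ) : Prop :=
  ∀ (m : ℕ) (x : ℝ), IntegrableOn (fun τ => τ ^ m * f τ) (Iic x)

section PowKernelIntegral

variable {f : ℝ → ℝ}

theorem IntegrableMomentsIic.id_mul (hf : IntegrableMomentsIic f) :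
    IntegrableMomentsIic fun τ => τ * f τ :=
  fun m x => (hf (m + 1) x).congr_fun (fun τ _ => by ring) measurableSet_Iic

theorem integrableOn_Iic_sub_pow_mul (hf : IntegrableMomentsIic f) (m : ℕ) (y x : ℝ) :
    IntegrableOn (fun τ => (y - τ) ^ m * f τ) (Iic x) := by
  induction m generalizing f with
  | zero => simpa using hf 0 x
  | succ m ih =>
    exact IntegrableOn.congr_fun (((ih hf).const_mul y).sub (ih hf.id_mul))
      (fun τ _ => by simp only [Pi.sub_apply]; ring) measurableSet_Iic

theorem powKernelIntegral_zero (x : ℝ) : powKernelIntegral f 0 x = ∫ τ in Iic x, f τ := by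
  simp [powKernelIntegral]

theorem powKernelIntegral_succ (hf : IntegrableMomentsIic f) (m : ℕ) (x : ℝ) :
    powKernelIntegral f (m + 1) x =
      x * powKernelIntegral f m x - powKernelIntegral (fun τ => τ * f τ) m x := by
  rw [powKernelIntegral, powKernelIntegral, powKernelIntegral, ← integral_const_mul,
    ← integral_sub ((integrableOn_Iic_sub_pow_mul hf m x x).const_mul x)
      (integrableOn_Iic_sub_pow_mul hf.id_mul m x x)]
  exact setIntegral_congr_fun measurableSet_Iic fun τ _ => by ring

theorem hasDerivAt_powKernelIntegral_zero (hcont : Continuous f) (hf : IntegrableMomentsIic f)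
    (t : ℝ) : HasDerivAt (powKernelIntegral f 0) (f t) t := by
  simp only [funext powKernelIntegral_zero]
  exact hasDerivAt_integral_Iic hcont (by simpa using hf 0) t

theorem hasDerivAt_powKernelIntegral_succ (hcont : Continuous f)
    (hf : IntegrableMomentsIic f) (m : ℕ) (t : ℝ) :
    HasDerivAt (powKernelIntegral f (m + 1)) ((m + 1) * powKernelIntegral f m t) t := by
  induction m generalizing f with
  | zero =>
    rw [funext (powKernelIntegral_succ hf 0)]
    refine ((hasDerivAt_id' t).fun_mul (hasDerivAt_powKernelIntegral_zero hcont hf t)).fun_sub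
      (hasDerivAt_powKernelIntegral_zero (f := fun τ => τ * f τ) (by fun_prop)
        hf.id_mul t) |>.congr_deriv ?_
    simp
  | succ m ih =>
    rw [funext (powKernelIntegral_succ hf (m + 1))]
    refine ((hasDerivAt_id' t).fun_mul (ih hcont hf)).fun_sub
      (ih (f := fun τ => τ * f τ) (by fun_prop) hf.id_mul) |>.congr_deriv ?_
    rw [powKernelIntegral_succ hf m t]
    push_cast
    ring

end PowKernelIntegral

theorem integrableMomentsIic_mul_exp {a M : ℝ} (ha : 0 < a) {h : ℝ → ℝ}
    (hcont : Continuous h) (hM : ∀ t, |h t| ≤ M) :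
    IntegrableMomentsIic fun τ => h τ * exp (a * τ) := by
  intro m x
  have hexp : IntegrableOn (fun τ => τ ^ m * exp (a * τ)) (Iic x) :=
    ProbabilityTheory.integrable_pow_mul_exp_of_integrable_exp_mul (X := id) (t := a / 2)
      (by positivity) (integrableOn_exp_mul_Iic (by linarith) x)
      (integrableOn_exp_mul_Iic (by linarith) x) m
  exact IntegrableOn.congr_fun (hexp.bdd_mul hcont.aestronglyMeasurable (ae_of_all _ hM))
    (fun τ _ => by ring) measurableSet_Iic

theorem setIntegral_Iic_mul_erlang_succ (a : ℝ) (h : ℝ → ℝ) (m : ℕ) (x : ℝ) :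
    ∫ τ in Iic x, h τ * erlang a (m + 1) (x - τ) =
      a ^ (m + 1) / m.factorial * exp (-a * x) *
        powKernelIntegral (fun τ => h τ * exp (a * τ)) m x := by
  rw [powKernelIntegral, ← integral_const_mul]
  refine setIntegral_congr_fun measurableSet_Iic fun τ _ => ?_
  have hexp : exp (-a * (x - τ)) = exp (-a * x) * exp (a * τ) := by rw [← exp_add]; ring_nf
  simp only [erlang, Nat.add_sub_cancel, hexp]
  ring

theorem linear_chain_step (a : ℝ) (ha : 0 < a) (i : ℕ) (hi : 2 ≤ i) (h : ℝ → ℝ)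
    (hcont : Continuous h) (hbdd : ∃ M : ℝ, ∀ t : ℝ, |h t| ≤ M)
    (F : ℕ → ℝ → ℝ)
    (hF : ∀ j : ℕ, 1 ≤ j → ∀ t : ℝ, F j t = ∫ τ in Set.Iic t, h τ * erlang a j (t - τ)) :
    ∀ t : ℝ, HasDerivAt (F i) (a * (F (i - 1) t - F i t)) t := by
  obtain ⟨M, hM⟩ := hbdd
  obtain ⟨n, rfl⟩ : ∃ n, i = n + 2 := ⟨i - 2, by omega⟩
  intro t
  have hF' (j : ℕ) : F (j + 1) = fun x => a ^ (j + 1) / j.factorial * exp (-a * x) *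
      powKernelIntegral (fun τ => h τ * exp (a * τ)) j x :=
    funext fun x => (hF (j + 1) (by omega) x).trans (setIntegral_Iic_mul_erlang_succ a h j x)
  have hP := hasDerivAt_powKernelIntegral_succ (f := fun τ => h τ * exp (a * τ))
    (by fun_prop) (integrableMomentsIic_mul_exp ha hcont hM) n t
  have hE : HasDerivAt (fun x => exp (-a * x)) (-a * exp (-a * t)) t := by
    simpa [mul_comm] using ((hasDerivAt_id t).const_mul (-a)).exp
  rw [hF' (n + 1)]
  refine ((hE.const_mul _).mul hP).congr_deriv ?_
  rw [show n + 2 - 1 = n + 1 from rfl, hF' n, Nat.factorial_succ]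
  push_cast
  field_simp
  ring
end

section
/- Let k ≥ 2 and 1 ≤ r ≤ k-1 be integers, let N, β₁, γ, α, λ > 0 be reals, let I₁ > 0, and let S₀, S₁, …, S_k, V be real numbers satisfying: 0 = -(β₁/N)S₀I₁ + kα·S₁ - λS₀ + αV; kα·S_{i+1} = (kα + λ)·S_i for 1 ≤ i ≤ r; S_{i+1} = S_i for r+1 ≤ i ≤ k-1; γI₁ = kα·S_k; (β₁/N)·S₀ = γ; λ·Σ_{i=0}^{r} S_i = αV; and Σ_{i=0}^{k} S_i + V + I₁ = N. Then I₁ = (Nkλ/β₁)·(β₁α - (α + λ)γ)(kα + λ)^r / [(kαλ + (k-r)λγ + k(α + λ)γ)(kα + λ)^r - k(α + λ)γ(kα)^r]. -/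
/-!
With `c = kα`, the equations for the susceptibility levels `1, …, r + 1` form the recurrence
`c S_{i+1} = (c + λ) S_i`, so `c^r S_{r+1} = (c + λ)^r S_1` and, telescoping,
`λ (S_1 + ⋯ + S_r) = c (S_{r+1} - S_1)`; the levels `r + 1, …, k` all equal `S_{r+1} = γ I₁ / c`.
Together with `S₀ = γ N / β₁`, the vaccinated balance and the population total, every compartment is
then linear in `I₁`, and solving the population equation for `I₁` gives the formula.
-/

open Finset

section Recurrences

variable {R : Type*} [CommRing R] (f : ℕ → R) {a b l : R} {n : ℕ}

theorem pow_mul_eq_pow_mul_of_mul_succ_eq (h : ∀ i < n, a * f (i + 1) = b * f i) :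
    a ^ n * f n = b ^ n * f 0 := by
  induction n with
  | zero => simp
  | succ n ih =>
    calc a ^ (n + 1) * f (n + 1) = a ^ n * (a * f (n + 1)) := by ring
      _ = b * (a ^ n * f n) := by rw [h n n.lt_succ_self]; ring
      _ = b ^ (n + 1) * f 0 := by
        rw [ih fun i hi => h i (hi.trans n.lt_succ_self)]; ring

theorem mul_sum_range_eq_of_mul_succ_eq (h : ∀ i < n, a * f (i + 1) = (a + l) * f i) :
    l * ∑ i ∈ range n, f i = a * (f n - f 0) := by
  rw [mul_sum, mul_sub, ← sum_range_sub (fun i => a * f i)]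
  exact sum_congr rfl fun i hi => by linear_combination -h i (mem_range.mp hi)

end Recurrences

theorem eq_of_succ_eq_of_le {α : Type*} {f : ℕ → α} {m n : ℕ}
    (h : ∀ i, m ≤ i → i < n → f (i + 1) = f i) {i : ℕ} (hmi : m ≤ i) (hin : i ≤ n) :
    f i = f m := by
  induction i, hmi using Nat.le_induction with
  | base => rfl
  | succ i hmi ih => rw [h i hmi hin, ih (by omega)]

theorem sum_Ico_eq_card_smul_of_succ_eq {M : Type*} [AddCommMonoid M] {f : ℕ → M} {m n : ℕ}
    (h : ∀ i, m ≤ i → i < n → f (i + 1) = f i) :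
    ∑ i ∈ Ico m (n + 1), f i = (n + 1 - m) • f m := by
  rw [sum_congr rfl fun i hi => eq_of_succ_eq_of_le h (mem_Ico.mp hi).1 (by grind),
    sum_const, Nat.card_Ico]

theorem strain1_denominator_pos {k γ α lam : ℝ} {r : ℕ} (hk : 0 < k) (hrk : r ≤ k)
    (hγ : 0 < γ) (hα : 0 < α) (hlam : 0 < lam) :
    0 < (k * α * lam + (k - r) * lam * γ + k * (α + lam) * γ) * (k * α + lam) ^ r -
      k * (α + lam) * γ * (k * α) ^ r := by
  have hpow : (k * α) ^ r ≤ (k * α + lam) ^ r := by gcongr; linarith [mul_pos hk hα]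
  have : 0 < (k * α * lam + (k - r) * lam * γ) * (k * α + lam) ^ r := by
    have : 0 ≤ k - r := by linarith
    positivity
  nlinarith [mul_pos (mul_pos hk (add_pos hα hlam)) hγ]

/-- The steady state after eliminating the recurrences, with `Sₘ = S_{r+1}` and
`T = S₁ + ⋯ + S_r`. -/
theorem strain1_I1_of_reduced {k N β₁ γ α lam I₁ V S₀ S₁ Sₘ T : ℝ} {r : ℕ}
    (hk : 0 < k) (hrk : r ≤ k) (hN : 0 < N) (hβ₁ : 0 < β₁) (hγ : 0 < γ) (hα : 0 < α)
    (hlam : 0 < lam)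
    (hS₀ : β₁ / N * S₀ = γ)
    (hgeom : (k * α) ^ r * Sₘ = (k * α + lam) ^ r * S₁)
    (htel : lam * T = k * α * (Sₘ - S₁))
    (hI₁ : γ * I₁ = k * α * Sₘ)
    (hV : lam * (S₀ + T) = α * V)
    (htot : S₀ + T + (k - r) * Sₘ + V + I₁ = N) :
    I₁ = N * k * lam / β₁ * ((β₁ * α - (α + lam) * γ) * (k * α + lam) ^ r) /
      ((k * α * lam + (k - r) * lam * γ + k * (α + lam) * γ) * (k * α + lam) ^ r -
        k * (α + lam) * γ * (k * α) ^ r) := by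
  have key : β₁ * I₁ * ((k * α * lam + (k - r) * lam * γ + k * (α + lam) * γ) * (k * α + lam) ^ r -
      k * (α + lam) * γ * (k * α) ^ r) =
      N * k * lam * ((β₁ * α - (α + lam) * γ) * (k * α + lam) ^ r) := by
    field_simp at hS₀
    linear_combination (k * α * lam * β₁ * (k * α + lam) ^ r) * htot
      + (k * lam * β₁ * (k * α + lam) ^ r) * hV
      - (k * β₁ * (α + lam) * (k * α + lam) ^ r) * htel
      - (k * lam * (α + lam) * (k * α + lam) ^ r) * hS₀
      - (k * β₁ * (α + lam) * k * α) * hgeom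
      + (k * β₁ * (α + lam) * (k * α + lam) ^ r + lam * β₁ * (k * α + lam) ^ r * (k - r)
        - k * β₁ * (α + lam) * (k * α) ^ r) * hI₁
  rw [eq_div_iff (strain1_denominator_pos hk hrk hγ hα hlam).ne']
  field_simp
  linear_combination key

theorem separated_strain1_I1_general
    (k r : ℕ) (hk : 2 ≤ k) (hrk : r ≤ k - 1)
    (N β₁ γ α lam : ℝ) (hN : 0 < N) (hβ₁ : 0 < β₁) (hγ : 0 < γ) (hα : 0 < α) (hlam : 0 < lam)
    (I₁ : ℝ)
    (S : ℕ → ℝ) (V : ℝ)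
    (h2 : ∀ i : ℕ, 1 ≤ i → i ≤ r → (k : ℝ) * α * S (i + 1) = ((k : ℝ) * α + lam) * S i)
    (h3 : ∀ i : ℕ, r + 1 ≤ i → i ≤ k - 1 → S (i + 1) = S i)
    (h4 : γ * I₁ = (k : ℝ) * α * S k)
    (h5 : (β₁ / N) * S 0 = γ)
    (h6 : lam * ∑ i ∈ Finset.range (r + 1), S i = α * V)
    (h7 : ∑ i ∈ Finset.range (k + 1), S i + V + I₁ = N) :
    I₁ = N * (k : ℝ) * lam / β₁ *
      ((β₁ * α - (α + lam) * γ) * ((k : ℝ) * α + lam) ^ r) /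
      (((k : ℝ) * α * lam + ((k : ℝ) - (r : ℝ)) * lam * γ + (k : ℝ) * (α + lam) * γ) *
          ((k : ℝ) * α + lam) ^ r -
        (k : ℝ) * (α + lam) * γ * ((k : ℝ) * α) ^ r) := by
  have hrk' : r + 1 ≤ k := by omega
  have hrec : ∀ i < r, (k : ℝ) * α * S (i + 1 + 1) = ((k : ℝ) * α + lam) * S (i + 1) :=
    fun i hi => h2 (i + 1) (by omega) (by omega)
  have hflat : ∀ i, r + 1 ≤ i → i < k → S (i + 1) = S i := fun i hi hik => h3 i hi (by omega)
  have hSk : S k = S (r + 1) := eq_of_succ_eq_of_le hflat hrk' le_rfl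
  have hsum_range : ∑ i ∈ range (r + 1), S i = S 0 + ∑ i ∈ range r, S (i + 1) := by
    rw [sum_range_succ', add_comm]
  have hsum_Ico : ∑ i ∈ Ico (r + 1) (k + 1), S i = ((k : ℝ) - r) * S (r + 1) := by
    rw [sum_Ico_eq_card_smul_of_succ_eq hflat, nsmul_eq_mul, Nat.cast_sub (by omega)]
    push_cast; ring
  rw [← sum_range_add_sum_Ico S (by omega : r + 1 ≤ k + 1), hsum_range, hsum_Ico] at h7
  rw [hsum_range] at h6
  rw [hSk] at h4
  exact strain1_I1_of_reduced (by positivity) (by exact_mod_cast (by omega : r ≤ k)) hN hβ₁ hγ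
    hα hlam h5 (pow_mul_eq_pow_mul_of_mul_succ_eq _ hrec)
    (mul_sum_range_eq_of_mul_succ_eq _ hrec) h4 h6 (by linarith)

/-- Strain 1-only endemic steady state of the separated immunity model: value of `I₁`. -/
theorem separated_strain1_I1
    (k r : ℕ) (hk : 2 ≤ k) (hr1 : 1 ≤ r) (hrk : r ≤ k - 1)
    (N β₁ γ α lam : ℝ) (hN : 0 < N) (hβ₁ : 0 < β₁) (hγ : 0 < γ) (hα : 0 < α) (hlam : 0 < lam)
    (I₁ : ℝ) (hI₁ : 0 < I₁)
    (S : ℕ → ℝ) (V : ℝ)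
    (h1 : 0 = -(β₁ / N) * S 0 * I₁ + (k : ℝ) * α * S 1 - lam * S 0 + α * V)
    (h2 : ∀ i : ℕ, 1 ≤ i → i ≤ r → (k : ℝ) * α * S (i + 1) = ((k : ℝ) * α + lam) * S i)
    (h3 : ∀ i : ℕ, r + 1 ≤ i → i ≤ k - 1 → S (i + 1) = S i)
    (h4 : γ * I₁ = (k : ℝ) * α * S k)
    (h5 : (β₁ / N) * S 0 = γ)
    (h6 : lam * ∑ i ∈ Finset.range (r + 1), S i = α * V)
    (h7 : ∑ i ∈ Finset.range (k + 1), S i + V + I₁ = N) :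
    I₁ = N * (k : ℝ) * lam / β₁ *
      ((β₁ * α - (α + lam) * γ) * ((k : ℝ) * α + lam) ^ r) /
      (((k : ℝ) * α * lam + ((k : ℝ) - (r : ℝ)) * lam * γ + (k : ℝ) * (α + lam) * γ) *
          ((k : ℝ) * α + lam) ^ r -
        (k : ℝ) * (α + lam) * γ * ((k : ℝ) * α) ^ r) :=
  separated_strain1_I1_general k r hk hrk N β₁ γ α lam hN hβ₁ hγ hα hlam I₁ S V h2 h3 h4 h5 h6 h7
end
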